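/- arXiv:math/0512550 — 3 statements merged into one kernel-verified Lean document; each statement's English description precedes it below -/
import Mathlib

section
/- Let S ⊂ R^d be compact, convex, symmetric, with 0 in its interior, uniformly curved with parameter ρ, and let |·| be its gauge norm. Define π x = x/|x| for x ≠ 0. Then there exists a constant c > 0 such that for all x ∉ S with x ≠ 0 and all y ∈ S: |x − y| ≥ |x − π x| + c·|π x − y|². -/
open RealInnerProductSpace Metric Filter Topology

set_option maxHeartbeats 1000000 in
/-- Triangle inequality for a uniformly curved shape (Lemma 3.3 of the paper).  Let
`S ⊆ ℝ^d` be compact, convex, symmetric, with `0` in its interior and uniformly curved: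
every point of `∂S` lies on a Euclidean sphere of radius `ρ` whose ball contains `S`.
Let `|·|` be the Minkowski gauge norm of `S` and `π x = x / |x|` the radial projection
onto `∂S`.  Then there is `c > 0` such that for all `x ∉ S` (with `x ≠ 0`) and all `y ∈ S`,
`|x − y| ≥ |x − π x| + c · |π x − y|²`. -/
theorem uniformly_curved_triangle_inequality
    {d : ℕ} (S : Set (EuclideanSpace ℝ (Fin d)))
    (hcomp : IsCompact S) (hconv : Convex ℝ S)
    (h0 : (0 : EuclideanSpace ℝ (Fin d)) ∈ interior S)
    (hsymm : ∀ x, x ∈ S ↔ -x ∈ S)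
    (hcurv : ∃ ρ : ℝ, 0 < ρ ∧ ∀ z ∈ frontier S,
      ∃ w : EuclideanSpace ℝ (Fin d), dist z w = ρ ∧ S ⊆ Metric.closedBall w ρ) :
    ∃ c : ℝ, 0 < c ∧
      ∀ x : EuclideanSpace ℝ (Fin d), x ∉ S → x ≠ 0 →
        ∀ y ∈ S,
          gauge S (x - y) ≥
            gauge S (x - (gauge S x)⁻¹ • x) + c * gauge S ((gauge S x)⁻¹ • x - y) ^ 2 := by
  classical
  obtain ⟨ρ, hρ, hcurv⟩ := hcurv
  have hcl : IsClosed S := hcomp.isClosed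
  have hS0 : S ∈ 𝓝 (0 : EuclideanSpace ℝ (Fin d)) := mem_interior_iff_mem_nhds.mp h0
  have habs : Absorbent ℝ S := absorbent_nhds_zero hS0
  have hbdd : Bornology.IsVonNBounded ℝ S :=
    (NormedSpace.isVonNBounded_iff ℝ).mpr hcomp.isBounded
  obtain ⟨r, hr, hball⟩ : ∃ r > 0, Metric.ball (0 : EuclideanSpace ℝ (Fin d)) r ⊆ S :=
    Metric.mem_nhds_iff.mp hS0
  obtain ⟨R, hR0, hRS⟩ := hcomp.isBounded.subset_closedBall_lt 0 0
  have hmem : ∀ v, gauge S v ≤ 1 → v ∈ S := fun v hv => by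
    have := (gauge_le_one_iff_mem_closure hconv hS0).mp hv
    rwa [hcl.closure_eq] at this
  refine ⟨r ^ 2 / (2 * R * ρ), by positivity, ?_⟩
  intro x hx hx0 y hy
  set g : ℝ := gauge S x with hgdef
  have hg1 : 1 < g := lt_of_not_ge fun h => hx (hmem x h)
  have hg0 : (0 : ℝ) < g := lt_trans one_pos hg1
  set z : EuclideanSpace ℝ (Fin d) := g⁻¹ • x with hzdef
  have hgz : gauge S z = 1 := by
    rw [hzdef, gauge_smul_of_nonneg (inv_nonneg.mpr hg0.le), smul_eq_mul, ← hgdef,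
      inv_mul_cancel₀ hg0.ne']
  have hzfr : z ∈ frontier S :=
    (gauge_eq_one_iff_mem_frontier hconv hS0).mp hgz
  have hzS : z ∈ S := hmem z hgz.le
  obtain ⟨w, hzw, hSw⟩ := hcurv z hzfr
  set u : EuclideanSpace ℝ (Fin d) := z - w with hudef
  have hu : ‖u‖ = ρ := by rw [hudef, ← dist_eq_norm]; exact hzw
  -- key curvature inequality
  have key : ∀ s ∈ S, ⟪s - z, u⟫ ≤ -(‖s - z‖ ^ 2 / 2) := by
    intro s hs
    have h1 : ‖s - w‖ ≤ ρ := by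
      have := hSw hs
      rwa [Metric.mem_closedBall, dist_eq_norm] at this
    have h2 : s - w = (s - z) + u := by rw [hudef]; abel
    have h3 : ‖(s - z) + u‖ ^ 2 ≤ ‖u‖ ^ 2 := by
      rw [← h2, hu]; nlinarith [norm_nonneg (s - w)]
    have h4 := norm_add_sq_real (s - z) u
    nlinarith [sq_nonneg ‖s - z‖]
  set h : ℝ := ⟪z, u⟫ with hhdef
  have hsup : ∀ s ∈ S, ⟪s, u⟫ ≤ h := by
    intro s hs
    have := key s hs
    have h2 : ⟪s, u⟫ = ⟪s - z, u⟫ + h := by rw [hhdef, ← inner_add_left]; rw [sub_add_cancel]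
    nlinarith [sq_nonneg ‖s - z‖]
  have hhpos : 0 < h := by
    have hs0 : (r / (2 * ρ)) • u ∈ S := by
      apply hball
      rw [Metric.mem_ball, dist_zero_right, norm_smul, hu, Real.norm_eq_abs,
        abs_of_pos (by positivity)]
      rw [div_mul_eq_mul_div, div_lt_iff₀ (by positivity)]
      nlinarith
    have := hsup _ hs0
    rw [real_inner_smul_left] at this
    have hun : ⟪u, u⟫ = ρ ^ 2 := by rw [real_inner_self_eq_norm_sq, hu]
    rw [hun] at this
    have : r * ρ / 2 ≤ h := by
      calc r * ρ / 2 = r / (2 * ρ) * ρ ^ 2 := by field_simp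
        _ ≤ h := this
    nlinarith
  have hhR : h ≤ R * ρ := by
    have h1 : h ≤ ‖z‖ * ‖u‖ := real_inner_le_norm z u
    have h2 : ‖z‖ ≤ R := by
      have := hRS hzS
      rwa [Metric.mem_closedBall, dist_zero_right] at this
    rw [hu] at h1
    nlinarith [norm_nonneg z]
  -- support bound: ⟪v, u⟫ ≤ gauge S v * h
  have supb : ∀ v : EuclideanSpace ℝ (Fin d), ⟪v, u⟫ ≤ gauge S v * h := by
    intro v
    rcases eq_or_ne v 0 with rfl | hv
    · simp [gauge_zero]
    · have hgv : 0 < gauge S v := gauge_pos habs hbdd |>.mpr hv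
      have hv' : (gauge S v)⁻¹ • v ∈ S := by
        apply hmem
        rw [gauge_smul_of_nonneg (inv_nonneg.mpr hgv.le), smul_eq_mul,
          inv_mul_cancel₀ hgv.ne']
      have := hsup _ hv'
      rw [real_inner_smul_left] at this
      calc ⟪v, u⟫ = gauge S v * ((gauge S v)⁻¹ * ⟪v, u⟫) := by
            field_simp
        _ ≤ gauge S v * h := by
            exact mul_le_mul_of_nonneg_left this hgv.le
  -- x = g • z
  have hxz : x = g • z := by
    rw [hzdef, smul_smul, mul_inv_cancel₀ hg0.ne', one_smul]
  have hxmz : x - z = (g - 1) • z := by rw [sub_smul, one_smul, ← hxz]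
  have hgxz : gauge S (x - z) = g - 1 := by
    rw [hxmz, gauge_smul_of_nonneg (by linarith), smul_eq_mul, hgz, mul_one]
  -- inner product computations
  have hinner1 : ⟪x - z, u⟫ = (g - 1) * h := by
    rw [hxmz, real_inner_smul_left, hhdef]
  have hinner2 : ‖y - z‖ ^ 2 / 2 ≤ ⟪z - y, u⟫ := by
    have := key y hy
    have h2 : ⟪z - y, u⟫ = -⟪y - z, u⟫ := by
      rw [← inner_neg_left]; congr 1; abel
    linarith [h2 ▸ neg_le_neg this]
  have hsplit : ⟪x - y, u⟫ = ⟪x - z, u⟫ + ⟪z - y, u⟫ := by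
    rw [← inner_add_left]; congr 1; abel
  have hmain : (g - 1) * h + ‖y - z‖ ^ 2 / 2 ≤ gauge S (x - y) * h := by
    calc (g - 1) * h + ‖y - z‖ ^ 2 / 2 ≤ ⟪x - z, u⟫ + ⟪z - y, u⟫ := by
          rw [hinner1]; linarith
      _ = ⟪x - y, u⟫ := hsplit.symm
      _ ≤ gauge S (x - y) * h := supb _
  -- gauge (z - y) ≤ ‖z - y‖ / r
  have hgzy : r * gauge S (z - y) ≤ ‖z - y‖ := mul_gauge_le_norm hball
  have hgzy0 : 0 ≤ gauge S (z - y) := gauge_nonneg _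
  have hnzy : ‖y - z‖ = ‖z - y‖ := norm_sub_rev _ _
  -- conclusion
  have hnzy2 : ‖y - z‖ ^ 2 = ‖z - y‖ ^ 2 := by rw [hnzy]
  set G : ℝ := gauge S (x - y) with hGdef
  set G2 : ℝ := gauge S (z - y) with hG2def
  set N : ℝ := ‖z - y‖ with hNdef
  rw [hnzy2] at hmain
  have hN0 : 0 ≤ N := norm_nonneg _
  clear_value G G2 N h u z g
  have hconc : G ≥ (g - 1) + r ^ 2 / (2 * R * ρ) * G2 ^ 2 := by
    have e1 : G ≥ (g - 1) + N ^ 2 / (2 * h) := by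
      rw [ge_iff_le, ← sub_nonneg]
      have expand : G - ((g - 1) + N ^ 2 / (2 * h))
          = (G * h - ((g - 1) * h + N ^ 2 / 2)) / h := by
        field_simp
      rw [expand]
      apply div_nonneg _ hhpos.le
      linarith
    have e2 : r ^ 2 / (2 * R * ρ) * G2 ^ 2 ≤ N ^ 2 / (2 * h) := by
      have hRρ : 0 < 2 * R * ρ := by positivity
      have h1 : (r * G2) ^ 2 ≤ N ^ 2 := by
        apply sq_le_sq' _ hgzy
        nlinarith [mul_nonneg hr.le hgzy0]
      have h2 : (r * G2) ^ 2 / (2 * R * ρ) ≤ N ^ 2 / (2 * R * ρ) :=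
        div_le_div_of_nonneg_right h1 hRρ.le
      have h3 : N ^ 2 / (2 * R * ρ) ≤ N ^ 2 / (2 * h) :=
        div_le_div_of_nonneg_left (by positivity) (by linarith) (by linarith)
      have h4 : r ^ 2 / (2 * R * ρ) * G2 ^ 2 = (r * G2) ^ 2 / (2 * R * ρ) := by ring
      linarith
    linarith
  rw [ge_iff_le, hgxz]
  exact hconc
end

section
/- A continuous-time simple symmetric random walk Z_t on the integers started at 0, run independently of two rate-1 Poisson processes X_t and Y_t, satisfies: with positive probability, −1 − X_t < Z_t < 1 + Y_t for all t ≥ 0. (That is, a rate-2 nearest-neighbor symmetric walk stays strictly between two linearly receding boundaries forever with positive probability.) -/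
/-!
Condition on the event `E = {N n₀ = 0}` that the clock has not rung by time `n₀`, so that the
walk sits at `0` up to time `n₀`. At every integer scale `n ≥ n₀` call the following bad: the
clock rings at least `4 (n + 1)` times in `(n₀, n + 1]`, one of the boundaries `X n`, `Y n` is at
most `n / 2`, or one of the first `4 (n + 1)` partial sums of the steps reaches `(n + 1) / 2` in
absolute value. Away from all bad events the walk stays strictly between the boundaries during
every time interval `[n, n + 1)`. Each constituent of a bad event is independent of `E`, so by
Chernoff bounds for Poisson variables and Hoeffding's inequality for the steps the bad event at
scale `n` has conditional probability `O(n e^{-n/32})` given `E`. For `n₀` large these sum to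
less than `1`, so `E` minus all bad events has positive probability.
-/

open MeasureTheory ProbabilityTheory Filter
open scoped NNReal

def IsPoissonProcess {Ω : Type*} [MeasurableSpace Ω] (μ : Measure Ω)
    (X : ℝ → Ω → ℕ) (r : ℝ≥0) : Prop :=
  (∀ ω, X 0 ω = 0) ∧
  (∀ ω, ∀ s t : ℝ, 0 ≤ s → s ≤ t → X s ω ≤ X t ω) ∧
  (∀ t : ℝ, 0 ≤ t → Measurable (X t)) ∧
  (∀ s t : ℝ, 0 ≤ s → s ≤ t →
    Measure.map (fun ω => X t ω - X s ω) μ = poissonMeasure (r * (t - s).toNNReal)) ∧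
  (∀ (u : ℕ → ℝ), u 0 = 0 → Monotone u →
    iIndepFun (fun i ω => X (u (i + 1)) ω - X (u i) ω) μ)

open Real Finset
open scoped ENNReal

lemma hasSum_poisson_mul_exp (r : ℝ≥0) (θ : ℝ) :
    HasSum (fun n : ℕ => exp (-r) * r ^ n / n.factorial * exp (θ * n))
      (exp (r * (exp θ - 1))) := by
  have h := (NormedSpace.expSeries_div_hasSum_exp (exp θ * r : ℝ)).mul_left (exp (-r))
  rw [← exp_eq_exp_ℝ, ← exp_add, show -(r : ℝ) + exp θ * r = r * (exp θ - 1) by ring] at h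
  refine h.congr_fun fun n => ?_
  rw [mul_pow, ← exp_nat_mul, mul_comm θ]
  ring

lemma mgf_poissonMeasure (r : ℝ≥0) (θ : ℝ) :
    mgf (fun n : ℕ => (n : ℝ)) (poissonMeasure r) θ = exp (r * (exp θ - 1)) := by
  rw [mgf, integral_poissonMeasure, ← (hasSum_poisson_mul_exp r θ).tsum_eq]
  rfl

lemma integrable_exp_mul_poissonMeasure (r : ℝ≥0) (θ : ℝ) :
    Integrable (fun n : ℕ => exp (θ * n)) (poissonMeasure r) := by
  rw [integrable_poissonMeasure_iff]
  simpa [abs_exp] using (hasSum_poisson_mul_exp r θ).summable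

lemma poissonMeasure_real_ge_le (r : ℝ≥0) (a : ℝ) :
    (poissonMeasure r).real {n | a ≤ n} ≤ exp (r * (exp 1 - 1) - a) := by
  have h := measure_ge_le_exp_mul_mgf (X := fun n : ℕ => (n : ℝ)) a zero_le_one
    (integrable_exp_mul_poissonMeasure r 1)
  rw [mgf_poissonMeasure, ← exp_add] at h
  convert h using 2
  ring

lemma poissonMeasure_real_le_le (r : ℝ≥0) (a : ℝ) :
    (poissonMeasure r).real {n | (n : ℝ) ≤ a} ≤ exp (r * (exp (-1) - 1) + a) := by
  have h := measure_le_le_exp_mul_mgf (X := fun n : ℕ => (n : ℝ)) a (neg_nonpos.2 zero_le_one)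
    (integrable_exp_mul_poissonMeasure r (-1))
  rw [mgf_poissonMeasure, ← exp_add] at h
  convert h using 2
  ring

namespace IsPoissonProcess

variable {Ω : Type*} [MeasurableSpace Ω] {μ : Measure Ω} {X : ℝ → Ω → ℕ} {r : ℝ≥0}

lemma measureReal_sub_preimage (hX : IsPoissonProcess μ X r) {s t : ℝ} (hs : 0 ≤ s)
    (hst : s ≤ t) (A : Set ℕ) :
    μ.real ((fun ω => X t ω - X s ω) ⁻¹' A) =
      (poissonMeasure (r * (t - s).toNNReal)).real A := by
  have hm : Measurable fun ω => X t ω - X s ω :=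
    (hX.2.2.1 t (hs.trans hst)).sub (hX.2.2.1 s hs)
  rw [← hX.2.2.2.1 s t hs hst, map_measureReal_apply hm A.to_countable.measurableSet]

lemma measureReal_sub_ge_le (hX : IsPoissonProcess μ X r) {s t : ℝ} (hs : 0 ≤ s)
    (hst : s ≤ t) (a : ℝ) :
    μ.real {ω | a ≤ ((X t ω - X s ω : ℕ) : ℝ)} ≤ exp (r * (t - s) * (exp 1 - 1) - a) := by
  have h := poissonMeasure_real_ge_le (r * (t - s).toNNReal) a
  rw [← hX.measureReal_sub_preimage hs hst, NNReal.coe_mul,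
    Real.coe_toNNReal _ (sub_nonneg.2 hst)] at h
  exact h

lemma measureReal_le_le (hX : IsPoissonProcess μ X r) {t : ℝ} (ht : 0 ≤ t) (a : ℝ) :
    μ.real {ω | (X t ω : ℝ) ≤ a} ≤ exp (r * t * (exp (-1) - 1) + a) := by
  have h := poissonMeasure_real_le_le (r * (t - 0).toNNReal) a
  rw [← hX.measureReal_sub_preimage le_rfl ht, NNReal.coe_mul, sub_zero,
    Real.coe_toNNReal _ ht] at h
  simp only [hX.1, Nat.sub_zero] at h
  exact h

lemma measure_eq_zero_pos (hX : IsPoissonProcess μ X r) {t : ℝ} (ht : 0 ≤ t) :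
    0 < μ {ω | X t ω = 0} := by
  have h := hX.measureReal_sub_preimage le_rfl ht {0}
  simp only [hX.1, Nat.sub_zero, poissonMeasure_real_singleton] at h
  have hpos : 0 < μ.real {ω | X t ω = 0} := by
    rw [show {ω | X t ω = 0} = (fun ω => X t ω) ⁻¹' {0} from rfl, h]
    positivity
  exact (ENNReal.toReal_pos_iff.1 hpos).1

lemma indepFun_sub (hX : IsPoissonProcess μ X r) {s t : ℝ} (hs : 0 ≤ s) (hst : s ≤ t) :
    IndepFun (X s) (fun ω => X t ω - X s ω) μ := by
  let u : ℕ → ℝ := fun i => if i = 0 then 0 else if i = 1 then s else t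
  have hu : Monotone u := by
    refine monotone_nat_of_le_succ fun i => ?_
    rcases i with _ | _ | i <;> simp [u, hs, hst]
  have h := (hX.2.2.2.2 u rfl hu).indepFun (i := 0) (j := 1) zero_ne_one
  simpa [u, hX.1] using h

end IsPoissonProcess

section Measure

variable {Ω : Type*} [MeasurableSpace Ω] {μ : Measure Ω}

lemma hasSubgaussianMGF_intCast_of_rademacher [IsProbabilityMeasure μ] {ξ : Ω → ℤ}
    (hm : Measurable ξ) (h : μ {ω | ξ ω = 1} = 1 / 2 ∧ μ {ω | ξ ω = -1} = 1 / 2) :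
    HasSubgaussianMGF (fun ω => (ξ ω : ℝ)) 1 μ := by
  have h1 : MeasurableSet {ω | ξ ω = 1} := hm (measurableSet_singleton 1)
  have h2 : MeasurableSet {ω | ξ ω = -1} := hm (measurableSet_singleton (-1))
  have hdisj : Disjoint {ω | ξ ω = 1} {ω | ξ ω = -1} :=
    Set.disjoint_left.2 fun ω h1 h2 => by simp_all
  have hsign : ∀ᵐ ω ∂μ, ξ ω = 1 ∨ ξ ω = -1 := by
    change μ ({ω | ξ ω = 1} ∪ {ω | ξ ω = -1})ᶜ = 0
    rw [prob_compl_eq_zero_iff (h1.union h2), measure_union hdisj h2, h.1, h.2,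
      ENNReal.add_halves]
  have hmean : μ[fun ω => (ξ ω : ℝ)] = 0 := by
    have hae : (fun ω => (ξ ω : ℝ)) =ᵐ[μ]
        fun ω => {ω | ξ ω = 1}.indicator (1 : Ω → ℝ) ω - {ω | ξ ω = -1}.indicator 1 ω := by
      filter_upwards [hsign] with ω hω
      rcases hω with hω | hω <;> simp [Set.indicator, hω]
    rw [integral_congr_ae hae, integral_sub ((integrable_const 1).indicator h1)
      ((integrable_const 1).indicator h2), integral_indicator_one h1, integral_indicator_one h2,
      measureReal_def, measureReal_def, h.1, h.2, sub_self]
  have h := hasSubgaussianMGF_of_mem_Icc_of_integral_eq_zero (a := -1) (b := 1)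
    (measurable_of_countable _ |>.comp hm).aemeasurable
    (hsign.mono fun ω hω => by rcases hω with hω | hω <;> simp [hω]) hmean
  rwa [show (‖(1 : ℝ) - -1‖₊ / 2) ^ 2 = 1 from NNReal.eq (by norm_num)] at h

lemma measureReal_le_abs_sum_range_le [IsFiniteMeasure μ] {X : ℕ → Ω → ℝ}
    (h_indep : iIndepFun X μ) {c : ℝ≥0} (h_subG : ∀ i, HasSubgaussianMGF (X i) c μ) {ε : ℝ}
    (hε : 0 ≤ ε) (n : ℕ) :
    μ.real {ω | ε ≤ |∑ i ∈ range n, X i ω|} ≤ 2 * exp (-ε ^ 2 / (2 * n * c)) := by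
  have hneg : iIndepFun (fun i => -X i) μ :=
    h_indep.comp (fun _ => Neg.neg) fun _ => measurable_neg
  have hup := HasSubgaussianMGF.measure_sum_range_ge_le_of_iIndepFun h_indep
    (fun i _ => h_subG i) hε (n := n)
  have hdown := HasSubgaussianMGF.measure_sum_range_ge_le_of_iIndepFun hneg
    (fun i _ => (h_subG i).neg) hε (n := n)
  have hsub : {ω | ε ≤ |∑ i ∈ range n, X i ω|} ⊆
      {ω | ε ≤ ∑ i ∈ range n, X i ω} ∪ {ω | ε ≤ ∑ i ∈ range n, (-X i) ω} := by
    intro ω hω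
    simpa only [Set.mem_union, Set.mem_ofPred_eq, Pi.neg_apply, sum_neg_distrib]
      using le_abs.1 hω
  calc μ.real {ω | ε ≤ |∑ i ∈ range n, X i ω|}
      ≤ μ.real {ω | ε ≤ ∑ i ∈ range n, X i ω} + μ.real {ω | ε ≤ ∑ i ∈ range n, (-X i) ω} :=
        (measureReal_mono hsub).trans (measureReal_union_le _ _)
    _ ≤ 2 * exp (-ε ^ 2 / (2 * n * c)) := by linarith

lemma ProbabilityTheory.iIndepFun.indepFun_sum_range_inl {ι : Type*} {F : ℕ ⊕ ι → Ω → ℝ}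
    (hF : iIndepFun F μ) (hFm : ∀ i, Measurable (F i)) (a : ι) (j : ℕ) :
    IndepFun (F (.inr a)) (fun ω => ∑ i ∈ range j, F (.inl i) ω) μ := by
  simpa [Finset.sum_fn] using (hF.indepFun_finsetSum_of_notMem hFm
    (s := (range j).map ⟨.inl, Sum.inl_injective⟩) (i := .inr a) (by simp)).symm

lemma measure_diff_iUnion_pos {E : Set Ω} {B : ℕ → Set Ω} {b : ℕ → ℝ≥0∞} (hE : μ E ≠ 0)
    (hE' : μ E ≠ ∞) (hB : ∀ k, μ (E ∩ B k) ≤ μ E * b k) (hb : ∑' k, b k < 1) :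
    0 < μ (E \ ⋃ k, B k) := by
  have hU : μ (E ∩ ⋃ k, B k) < μ E :=
    calc μ (E ∩ ⋃ k, B k) ≤ ∑' k, μ (E ∩ B k) := by
          rw [Set.inter_iUnion]; exact measure_iUnion_le _
      _ ≤ ∑' k, μ E * b k := ENNReal.tsum_le_tsum hB
      _ = μ E * ∑' k, b k := ENNReal.tsum_mul_left
      _ < μ E * 1 := (ENNReal.mul_lt_mul_iff_right hE hE').2 hb
      _ = μ E := mul_one _
  refine pos_iff_ne_zero.2 fun h => hU.not_ge ?_
  simpa [h] using measure_le_inter_add_sdiff μ E (⋃ k, B k)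

lemma measure_inter_preimage_le_of_indepFun [IsFiniteMeasure μ] {β γ : Type*}
    [MeasurableSpace β] [MeasurableSpace γ] {f : Ω → β} {g : Ω → γ} (h : IndepFun f g μ)
    {A : Set β} {B : Set γ} (hA : MeasurableSet A) (hB : MeasurableSet B) {c : ℝ}
    (hc : μ.real (g ⁻¹' B) ≤ c) : μ (f ⁻¹' A ∩ g ⁻¹' B) ≤ μ (f ⁻¹' A) * ENNReal.ofReal c := by
  rw [h.measure_inter_preimage_eq_mul A B hA hB, ← ofReal_measureReal (s := g ⁻¹' B)]
  gcongr

end Measure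

def badEvent {Ω : Type*} (N X Y : ℝ → Ω → ℕ) (ξ : ℕ → Ω → ℤ) (n₀ n : ℕ) : Set Ω :=
  {ω | 4 * ((n : ℝ) + 1) ≤ ((N (n + 1) ω - N n₀ ω : ℕ) : ℝ)} ∪ {ω | (X n ω : ℝ) ≤ n / 2} ∪
    {ω | (Y n ω : ℝ) ≤ n / 2} ∪
    ⋃ j ∈ range (4 * (n + 1)), {ω | ((n : ℝ) + 1) / 2 ≤ |∑ i ∈ range j, (ξ i ω : ℝ)|}

lemma between_of_notMem_badEvent {Ω : Type*} {N X Y : ℝ → Ω → ℕ} {ξ : ℕ → Ω → ℤ} {n₀ : ℕ}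
    {ω : Ω} (hN : ∀ s t : ℝ, 0 ≤ s → s ≤ t → N s ω ≤ N t ω)
    (hX : ∀ s t : ℝ, 0 ≤ s → s ≤ t → X s ω ≤ X t ω)
    (hY : ∀ s t : ℝ, 0 ≤ s → s ≤ t → Y s ω ≤ Y t ω) (h0 : N n₀ ω = 0)
    (hgood : ∀ k, ω ∉ badEvent N X Y ξ n₀ (k + n₀)) {t : ℝ} (ht : 0 ≤ t) :
    -1 - (X t ω : ℤ) < ∑ i ∈ range (N t ω), ξ i ω ∧
      ∑ i ∈ range (N t ω), ξ i ω < 1 + (Y t ω : ℤ) := by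
  suffices h : -1 - (X t ω : ℝ) < ∑ i ∈ range (N t ω), (ξ i ω : ℝ) ∧
      ∑ i ∈ range (N t ω), (ξ i ω : ℝ) < 1 + Y t ω by exact_mod_cast h
  have hXt : (0 : ℝ) ≤ X t ω := Nat.cast_nonneg _
  have hYt : (0 : ℝ) ≤ Y t ω := Nat.cast_nonneg _
  rcases lt_or_ge t n₀ with hsmall | hlarge
  · have hNt : N t ω = 0 := Nat.le_zero.1 (h0 ▸ hN t n₀ ht hsmall.le)
    simp only [hNt, range_zero, sum_empty]
    constructor <;> linarith
  set n := ⌊t⌋₊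
  have hn₀ : n₀ ≤ n := Nat.le_floor hlarge
  have hnt : (n : ℝ) ≤ t := Nat.floor_le ht
  have htn : t ≤ n + 1 := (Nat.lt_floor_add_one t).le
  have hbad := hgood (n - n₀)
  rw [Nat.sub_add_cancel hn₀] at hbad
  simp only [badEvent, Set.mem_union, Set.mem_iUnion, Set.mem_ofPred_eq, mem_range, not_or,
    not_exists, not_le, h0, Nat.sub_zero] at hbad
  obtain ⟨⟨⟨hNn, hXn⟩, hYn⟩, hwalk⟩ := hbad
  have hj : N t ω < 4 * (n + 1) := by
    have := hN t (n + 1) ht htn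
    exact_mod_cast (Nat.cast_le.2 this).trans_lt hNn
  obtain ⟨hlo, hhi⟩ := abs_lt.1 (hwalk _ hj)
  have hXnt : (X n ω : ℝ) ≤ X t ω := by exact_mod_cast hX n t n.cast_nonneg hnt
  have hYnt : (Y n ω : ℝ) ≤ Y t ω := by exact_mod_cast hY n t n.cast_nonneg hnt
  constructor <;> linarith

section Scales

variable {Ω : Type*} [MeasurableSpace Ω] {μ : Measure Ω} [IsFiniteMeasure μ]
  {N X Y : ℝ → Ω → ℕ} {ξ : ℕ → Ω → ℤ} {n₀ n : ℕ}

lemma measure_inter_clock_ge_le (hN : IsPoissonProcess μ N 2) (hn : n₀ ≤ n) :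
    μ ({ω | N n₀ ω = 0} ∩ {ω | 4 * ((n : ℝ) + 1) ≤ ((N (n + 1) ω - N n₀ ω : ℕ) : ℝ)}) ≤
      μ {ω | N n₀ ω = 0} * ENNReal.ofReal (exp (-n / 32)) := by
  have hn' : (n₀ : ℝ) ≤ n + 1 := by exact_mod_cast hn.trans n.le_succ
  refine measure_inter_preimage_le_of_indepFun (hN.indepFun_sub n₀.cast_nonneg hn')
    (measurableSet_singleton 0) (B := {k | 4 * ((n : ℝ) + 1) ≤ k})
    (Set.to_countable _).measurableSet
    ((hN.measureReal_sub_ge_le n₀.cast_nonneg hn' _).trans (exp_le_exp.2 ?_))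
  have he := exp_one_lt_d9
  have he1 : 1 ≤ exp 1 := one_le_exp zero_le_one
  have hn₀ : (0 : ℝ) ≤ n₀ := n₀.cast_nonneg
  push_cast
  nlinarith

lemma measure_inter_le_half_le (hX : IsPoissonProcess μ X 1) (hNX : IndepFun (N n₀) (X n) μ) :
    μ ({ω | N n₀ ω = 0} ∩ {ω | (X n ω : ℝ) ≤ n / 2}) ≤
      μ {ω | N n₀ ω = 0} * ENNReal.ofReal (exp (-n / 32)) := by
  refine measure_inter_preimage_le_of_indepFun hNX (measurableSet_singleton 0)
    (B := {k | (k : ℝ) ≤ n / 2}) (Set.to_countable _).measurableSet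
    ((hX.measureReal_le_le n.cast_nonneg _).trans (exp_le_exp.2 ?_))
  have he := exp_neg_one_lt_d9
  have hn : (0 : ℝ) ≤ n := n.cast_nonneg
  push_cast
  nlinarith

lemma measure_inter_abs_walk_ge_le (hξ : iIndepFun (fun i ω => (ξ i ω : ℝ)) μ)
    (hξs : ∀ i, HasSubgaussianMGF (fun ω => (ξ i ω : ℝ)) 1 μ) {j : ℕ}
    (hNξ : IndepFun (fun ω => (N n₀ ω : ℝ)) (fun ω => ∑ i ∈ range j, (ξ i ω : ℝ)) μ)
    (hj : j < 4 * (n + 1)) :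
    μ ({ω | N n₀ ω = 0} ∩ {ω | ((n : ℝ) + 1) / 2 ≤ |∑ i ∈ range j, (ξ i ω : ℝ)|}) ≤
      μ {ω | N n₀ ω = 0} * ENNReal.ofReal (2 * exp (-n / 32)) := by
  rcases j.eq_zero_or_pos with rfl | hj0
  · have hε : ¬ ((n : ℝ) + 1) / 2 ≤ 0 := not_le.2 (by positivity)
    simp [hε]
  have hE : {ω | N n₀ ω = 0} = (fun ω => (N n₀ ω : ℝ)) ⁻¹' {0} := by ext; simp
  rw [hE]
  refine measure_inter_preimage_le_of_indepFun hNξ (measurableSet_singleton 0)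
    (B := {x | ((n : ℝ) + 1) / 2 ≤ |x|}) (measurableSet_le measurable_const measurable_abs)
    ((measureReal_le_abs_sum_range_le hξ hξs (ε := ((n : ℝ) + 1) / 2) (by positivity) j).trans
      (mul_le_mul_of_nonneg_left (exp_le_exp.2 ?_) zero_le_two))
  have hjn : (j : ℝ) < 4 * (n + 1) := by exact_mod_cast hj
  have hj1 : (1 : ℝ) ≤ j := by exact_mod_cast hj0
  rw [neg_div, neg_div, neg_le_neg_iff, div_le_div_iff₀ (by norm_num) (by positivity)]
  push_cast
  nlinarith

lemma measure_inter_badEvent_le (hN : IsPoissonProcess μ N 2) (hX : IsPoissonProcess μ X 1)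
    (hY : IsPoissonProcess μ Y 1) (hξ : iIndepFun (fun i ω => (ξ i ω : ℝ)) μ)
    (hξs : ∀ i, HasSubgaussianMGF (fun ω => (ξ i ω : ℝ)) 1 μ)
    (hNX : IndepFun (fun ω t => N t ω) (fun ω t => X t ω) μ)
    (hNY : IndepFun (fun ω t => N t ω) (fun ω t => Y t ω) μ)
    (hNξ : ∀ j, IndepFun (fun ω => (N n₀ ω : ℝ)) (fun ω => ∑ i ∈ range j, (ξ i ω : ℝ)) μ)
    (hn : n₀ ≤ n) :
    μ ({ω | N n₀ ω = 0} ∩ badEvent N X Y ξ n₀ n) ≤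
      μ {ω | N n₀ ω = 0} * ENNReal.ofReal (11 * ((n + 1) * exp (-n / 32))) := by
  set E := {ω | N n₀ ω = 0}
  have hwalk := measure_biUnion_finset_le (μ := μ) (range (4 * (n + 1)))
    fun j => E ∩ {ω | ((n : ℝ) + 1) / 2 ≤ |∑ i ∈ range j, (ξ i ω : ℝ)|}
  have hsum : ∑ j ∈ range (4 * (n + 1)),
      μ (E ∩ {ω | ((n : ℝ) + 1) / 2 ≤ |∑ i ∈ range j, (ξ i ω : ℝ)|}) ≤
        μ E * ENNReal.ofReal (((4 * (n + 1) : ℕ) : ℝ) * (2 * exp (-n / 32))) := by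
    refine (sum_le_sum fun j hj =>
      measure_inter_abs_walk_ge_le hξ hξs (hNξ j) (mem_range.1 hj)).trans ?_
    rw [sum_const, card_range, nsmul_eq_mul, ENNReal.ofReal_mul (Nat.cast_nonneg _),
      ENNReal.ofReal_natCast, mul_left_comm]
  calc μ (E ∩ badEvent N X Y ξ n₀ n)
      ≤ μ (E ∩ {ω | 4 * ((n : ℝ) + 1) ≤ ((N (n + 1) ω - N n₀ ω : ℕ) : ℝ)}) +
          μ (E ∩ {ω | (X n ω : ℝ) ≤ n / 2}) + μ (E ∩ {ω | (Y n ω : ℝ) ≤ n / 2}) +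
          μ (⋃ j ∈ range (4 * (n + 1)),
            E ∩ {ω | ((n : ℝ) + 1) / 2 ≤ |∑ i ∈ range j, (ξ i ω : ℝ)|}) := by
        simp only [badEvent, Set.inter_union_distrib_left, Set.inter_iUnion₂]
        refine (measure_union_le _ _).trans (add_le_add_left ?_ _)
        refine (measure_union_le _ _).trans (add_le_add_left ?_ _)
        exact measure_union_le _ _
    _ ≤ μ E * ENNReal.ofReal (exp (-n / 32)) + μ E * ENNReal.ofReal (exp (-n / 32)) +
          μ E * ENNReal.ofReal (exp (-n / 32)) +
          μ E * ENNReal.ofReal (((4 * (n + 1) : ℕ) : ℝ) * (2 * exp (-n / 32))) := by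
        gcongr
        exacts [measure_inter_clock_ge_le hN hn,
          measure_inter_le_half_le hX (hNX.comp (measurable_pi_apply _) (measurable_pi_apply _)),
          measure_inter_le_half_le hY (hNY.comp (measurable_pi_apply _) (measurable_pi_apply _)),
          hwalk.trans hsum]
    _ ≤ μ E * ENNReal.ofReal (11 * ((n + 1) * exp (-n / 32))) := by
        simp only [← mul_add]
        gcongr
        rw [← ENNReal.ofReal_add (by positivity) (by positivity),
          ← ENNReal.ofReal_add (by positivity) (by positivity),
          ← ENNReal.ofReal_add (by positivity) (by positivity)]
        gcongr
        have hn : (0 : ℝ) ≤ n := n.cast_nonneg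
        push_cast
        nlinarith [exp_pos (-n / 32)]

end Scales

lemma summable_succ_mul_exp_neg_div {c : ℝ} (hc : 0 < c) :
    Summable fun n : ℕ => ((n : ℝ) + 1) * exp (-n / c) := by
  have h := (summable_pow_mul_exp_neg_nat_mul 1 (inv_pos.2 hc)).add
    (summable_pow_mul_exp_neg_nat_mul 0 (inv_pos.2 hc))
  refine h.congr fun n => ?_
  rw [neg_div, div_eq_inv_mul, neg_mul]
  ring

lemma Summable.exists_tsum_ofReal_nat_add_lt_one {f : ℕ → ℝ} (hf : Summable f) :
    ∃ n₀, ∑' k, ENNReal.ofReal (f (k + n₀)) < 1 :=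
  ((ENNReal.tendsto_sum_nat_add _ hf.tsum_ofReal_ne_top).eventually (gt_mem_nhds one_pos)).exists

/-- A continuous-time simple symmetric random walk `Z` on `ℤ` with total jump rate `2`
(built from a rate-`2` Poisson clock `N` and i.i.d. uniform `±1` steps `ξ`), run
independently of two rate-`1` Poisson processes `X` and `Y`, stays strictly between the
receding boundaries `−1 − X_t` and `1 + Y_t` for all times with positive probability.
(The boundaries are the extreme occupied sites of the one-dimensional Richardson model.) -/
theorem ctrw_between_poisson_boundaries
    {Ω : Type*} [MeasurableSpace Ω] (μ : Measure Ω) [IsProbabilityMeasure μ]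
    (N X Y : ℝ → Ω → ℕ) (ξ : ℕ → Ω → ℤ)
    (hN : IsPoissonProcess μ N 2)
    (hX : IsPoissonProcess μ X 1) (hY : IsPoissonProcess μ Y 1)
    (hξmeas : ∀ i, Measurable (ξ i))
    (hξdist : ∀ i, μ {ω | ξ i ω = 1} = 1 / 2 ∧ μ {ω | ξ i ω = -1} = 1 / 2)
    (hindep : iIndepFun
      (m := fun i : ℕ ⊕ Fin 3 =>
        (Sum.rec (motive := fun i => MeasurableSpace (Sum.elim (fun _ : ℕ => ℤ)
            (fun _ : Fin 3 => ℝ → ℕ) i))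
          (fun _ => (inferInstance : MeasurableSpace ℤ))
          (fun _ => (inferInstance : MeasurableSpace (ℝ → ℕ))) i))
      (fun i => Sum.rec (motive := fun i => Ω → Sum.elim (fun _ : ℕ => ℤ)
            (fun _ : Fin 3 => ℝ → ℕ) i)
        (fun n ω => ξ n ω)
        (fun j ω => fun t => (![N, X, Y] j) t ω) i) μ) :
    0 < μ {ω | ∀ t : ℝ, 0 ≤ t →
      (-1 - (X t ω : ℤ) < ∑ i ∈ Finset.range (N t ω), ξ i ω ∧
        ∑ i ∈ Finset.range (N t ω), ξ i ω < 1 + (Y t ω : ℤ))} := by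
  obtain ⟨n₀, hn₀⟩ := ((summable_succ_mul_exp_neg_div (c := 32) (by norm_num)).mul_left
    11).exists_tsum_ofReal_nat_add_lt_one
  let F := Sum.elim (fun i ω => (ξ i ω : ℝ)) fun j ω => (![N, X, Y] j n₀ ω : ℝ)
  have hF : iIndepFun F μ := by
    convert hindep.comp (γ := fun _ => ℝ) (fun i => Sum.rec (motive := fun i =>
      Sum.elim (fun _ : ℕ => ℤ) (fun _ : Fin 3 => ℝ → ℕ) i → ℝ)
      (fun _ z => Int.cast (R := ℝ) z) (fun _ p => Nat.cast (R := ℝ) (p n₀)) i) (by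
        rintro (i | i)
        · exact measurable_of_countable (Int.cast : ℤ → ℝ)
        · exact (measurable_of_countable (Nat.cast : ℕ → ℝ)).comp (measurable_pi_apply _))
      using 1
    ext (i | i) ω <;> rfl
  have hFm : ∀ i, Measurable (F i) := by
    rintro (i | i)
    · exact (measurable_of_countable _).comp (hξmeas i)
    · fin_cases i
      exacts [(measurable_of_countable _).comp (hN.2.2.1 _ n₀.cast_nonneg),
        (measurable_of_countable _).comp (hX.2.2.1 _ n₀.cast_nonneg),
        (measurable_of_countable _).comp (hY.2.2.1 _ n₀.cast_nonneg)]
  have hbad := fun k => measure_inter_badEvent_le hN hX hY (hF.precomp Sum.inl_injective)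
    (fun i => hasSubgaussianMGF_intCast_of_rademacher (hξmeas i) (hξdist i))
    (hindep.indepFun (i := .inr 0) (j := .inr 1) (by simp))
    (hindep.indepFun (i := .inr 0) (j := .inr 2) (by simp))
    (hF.indepFun_sum_range_inl hFm 0) (Nat.le_add_left n₀ k)
  refine (measure_diff_iUnion_pos (hN.measure_eq_zero_pos n₀.cast_nonneg).ne'
    (measure_ne_top _ _) hbad hn₀).trans_le (measure_mono fun ω hω t ht => ?_)
  exact between_of_notMem_badEvent (hN.2.1 ω) (hX.2.1 ω) (hY.2.1 ω) hω.1
    (fun k hk => hω.2 (Set.mem_iUnion.2 ⟨k, hk⟩)) ht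
end

section
/- Let S ⊂ R^d be compact, convex, symmetric, uniformly curved with constant c from the triangle-inequality lemma, and let |·|, π be the gauge norm and radial projection. Fix n large, β ∈ (1/2,1), α with (β+1)/2 < α < 1, and angular sectors A₁ ⊂ A₂ with common center z ∈ ∂S and apertures r and r + n^{α−1}. Then for every x with x/|x| ∈ the smaller sector A₁ (measured by gauge distance of π x to z less than r) and |x| > n + n^β, and every y with y/|y| outside the larger sector (gauge distance of π y to z at least r + n^{α−1}) and |y| ≤ n + n^β: |x − y| ≥ |x| − (n + n^β) + c·n^{2α−1}. -/
set_option maxHeartbeats 1000000 in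
/-- Distance comparison across angular sectors (first part of Claim 4.3 of the paper).
Let `S ⊆ ℝ^d` be compact, convex, symmetric, with `0` in its interior, uniformly curved
with constant `c > 0` from the triangle-inequality lemma (`|x−y| ≥ |x−πx| + c|πx−y|²` for
`x ∉ S`, `y ∈ S`, where `|·|` is the gauge norm and `π x = x/|x|`).  Fix `z ∈ ∂S`,
`β ∈ (1/2,1)`, `(β+1)/2 < α < 1` and `r > 0`, and consider the angular sectors `A₁ ⊆ A₂`
centered at `z` with apertures `r` and `r + n^{α−1}`.  Then for all sufficiently large `n`:
for every `x` in the sector `A₁` with `|x| > n + n^β` and every `y ≠ 0` outside the sector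
`A₂` with `|y| ≤ n + n^β`, one has `|x − y| ≥ |x| − (n + n^β) + c·n^{2α−1}`. -/
theorem sector_distance_comparison
    {d : ℕ} (S : Set (EuclideanSpace ℝ (Fin d)))
    (hcomp : IsCompact S) (hconv : Convex ℝ S)
    (h0 : (0 : EuclideanSpace ℝ (Fin d)) ∈ interior S)
    (hsymm : ∀ x, x ∈ S ↔ -x ∈ S)
    (c : ℝ) (hc : 0 < c)
    (hcurv : ∀ x : EuclideanSpace ℝ (Fin d), x ∉ S → x ≠ 0 → ∀ y ∈ S,
      gauge S (x - y) ≥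
        gauge S (x - (gauge S x)⁻¹ • x) + c * gauge S ((gauge S x)⁻¹ • x - y) ^ 2)
    (z : EuclideanSpace ℝ (Fin d)) (hz : gauge S z = 1)
    (β α r : ℝ) (hβ : β ∈ Set.Ioo (1/2 : ℝ) 1) (hα : (β + 1)/2 < α) (hα1 : α < 1)
    (hr : 0 < r) :
    ∃ N : ℝ, ∀ n : ℝ, N ≤ n →
      ∀ x y : EuclideanSpace ℝ (Fin d), x ≠ 0 → y ≠ 0 →
        gauge S x > n + n ^ β →
        gauge S ((gauge S x)⁻¹ • x - z) < r →
        gauge S y ≤ n + n ^ β →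
        gauge S ((gauge S y)⁻¹ • y - z) ≥ r + n ^ (α - 1) →
        gauge S (x - y) ≥ gauge S x - (n + n ^ β) + c * n ^ (2 * α - 1) := by
  have hSnhds : S ∈ nhds (0 : EuclideanSpace ℝ (Fin d)) := mem_interior_iff_mem_nhds.mp h0
  have habs : Absorbent ℝ S := absorbent_nhds_zero hSnhds
  have hbdd : Bornology.IsVonNBounded ℝ S := NormedSpace.isVonNBounded_of_isBounded ℝ hcomp.isBounded
  have hsym' : ∀ w ∈ S, -w ∈ S := fun w hw => (hsymm w).mp hw
  have h2α : (0:ℝ) < 2 - 2*α := by linarith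
  refine ⟨max 2 (c ^ (1/(2-2*α))), fun n hn x y hx0 hy0 hgx hπx hgy hπy => ?_⟩
  have hn2 : (2:ℝ) ≤ n := le_trans (le_max_left _ _) hn
  have hn0 : (0:ℝ) < n := by linarith
  -- key exponent bound : c * n ^ (2α-2) ≤ 1
  have hce : c * n ^ (2*α - 2) ≤ 1 := by
    have h1 : c ^ (1/(2-2*α)) ≤ n := le_trans (le_max_right _ _) hn
    have h2 : (c ^ (1/(2-2*α))) ^ (2-2*α) ≤ n ^ (2-2*α) :=
      Real.rpow_le_rpow (Real.rpow_nonneg hc.le _) h1 h2α.le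
    rw [← Real.rpow_mul hc.le, one_div, inv_mul_cancel₀ h2α.ne', Real.rpow_one] at h2
    have h3 : n ^ (2*α - 2) = (n ^ (2-2*α))⁻¹ := by
      rw [← Real.rpow_neg hn0.le]; ring_nf
    have h4 : (0:ℝ) < n ^ (2-2*α) := Real.rpow_pos_of_pos hn0 _
    rw [h3, mul_inv_le_iff₀ h4, one_mul]
    exact h2
  have hβpos : (0:ℝ) ≤ n ^ β := Real.rpow_nonneg hn0.le _
  set gx := gauge S x with hgxdef
  set gy := gauge S y with hgydef
  have hgy0 : 0 < gy := (gauge_pos habs hbdd).mpr hy0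
  have hgx0 : 0 < gx := lt_trans (by positivity) hgx
  have hgylt : gy < gx := lt_of_le_of_lt hgy hgx
  have hne : gy ≠ 0 := hgy0.ne'
  set px := (gauge S x)⁻¹ • x with hpx
  set py := (gauge S y)⁻¹ • y with hpy
  set x' := gy⁻¹ • x with hx'
  -- gauge of x'
  have hgx' : gauge S x' = gy⁻¹ * gx := by
    rw [hx', gauge_smul_of_nonneg (inv_nonneg.mpr hgy0.le), smul_eq_mul]
  have hgx'1 : 1 < gauge S x' := by
    rw [hgx']
    rw [← inv_mul_cancel₀ hne]
    exact mul_lt_mul_of_pos_left hgylt (inv_pos.mpr hgy0)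
  have hx'S : x' ∉ S := fun h => absurd (gauge_le_one_of_mem h) (not_le.mpr hgx'1)
  have hx'0 : x' ≠ 0 := smul_ne_zero (inv_ne_zero hne) hx0
  -- py ∈ S
  have hpyS : py ∈ S := by
    have h1 : gauge S py = 1 := by
      rw [hpy, gauge_smul_of_nonneg (inv_nonneg.mpr hgy0.le), smul_eq_mul, ← hgydef,
        inv_mul_cancel₀ hne]
    have := (gauge_le_one_iff_mem_closure hconv hSnhds).mp h1.le
    rwa [hcomp.isClosed.closure_eq] at this
  -- radial projection of x' equals px
  have hπeq : (gauge S x')⁻¹ • x' = px := by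
    rw [hgx', hx', smul_smul]
    have hco : (gy⁻¹ * gx)⁻¹ * gy⁻¹ = (gauge S x)⁻¹ := by
      rw [← hgxdef]; field_simp
    rw [hco, hpx]
  -- curvature inequality at scale gy
  have hkey := hcurv x' hx'S hx'0 py hpyS
  rw [hπeq] at hkey
  -- rescale each term
  have e1 : gauge S (x - y) = gy * gauge S (x' - py) := by
    have : gy • (x' - py) = x - y := by
      rw [smul_sub, hx', hpy, ← hgydef, smul_inv_smul₀ hne, smul_inv_smul₀ hne]
    rw [← this, gauge_smul_of_nonneg hgy0.le, smul_eq_mul]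
  have e2 : gy * gauge S (x' - px) = gx - gy := by
    have hsub : x' - px = (gy⁻¹ - gx⁻¹) • x := by
      rw [hx', hpx, sub_smul]
    have hcoef : (0:ℝ) ≤ gy⁻¹ - gx⁻¹ := by
      have := inv_anti₀ hgy0 hgylt.le
      linarith
    rw [hsub, gauge_smul_of_nonneg hcoef, smul_eq_mul, ← hgxdef]
    field_simp
  -- lower bound on the angular separation
  have hang : n ^ (α - 1) ≤ gauge S (px - py) := by
    have ht : gauge S (py - z) ≤ gauge S (py - px) + gauge S (px - z) := by
      have : py - z = (py - px) + (px - z) := by abel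
      rw [this]; exact gauge_add_le hconv habs _ _
    have hflip : gauge S (py - px) = gauge S (px - py) := by
      rw [← gauge_neg hsym' (py - px), neg_sub]
    rw [hflip] at ht
    have := le_trans hπy ht
    linarith
  have hang0 : (0:ℝ) ≤ n ^ (α - 1) := Real.rpow_nonneg hn0.le _
  have hsq : n ^ (2*α - 2) ≤ gauge S (px - py) ^ 2 := by
    have h1 : n ^ (α - 1) * n ^ (α - 1) = n ^ (2*α - 2) := by
      rw [← Real.rpow_add hn0]; ring_nf
    calc n ^ (2*α - 2) = n ^ (α-1) * n ^ (α-1) := h1.symm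
      _ ≤ gauge S (px - py) * gauge S (px - py) :=
          mul_le_mul hang hang hang0 (gauge_nonneg _)
      _ = gauge S (px - py) ^ 2 := (sq _).symm
  -- combine
  have hmain : gauge S (x - y) ≥ gx - gy + c * gy * n ^ (2*α - 2) := by
    have h1 : gy * (gauge S (x' - px) + c * gauge S (px - py) ^ 2) ≤ gy * gauge S (x' - py) :=
      mul_le_mul_of_nonneg_left hkey hgy0.le
    have h2 : c * gy * n ^ (2*α-2) ≤ gy * (c * gauge S (px - py) ^ 2) := by
      have := mul_le_mul_of_nonneg_left hsq (mul_pos hc hgy0).le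
      calc c * gy * n ^ (2*α-2) ≤ c * gy * gauge S (px - py) ^ 2 := this
        _ = gy * (c * gauge S (px - py) ^ 2) := by ring
    rw [e1, mul_add] at *
    linarith [h1, h2, e2]
  -- final arithmetic
  have hmul : n ^ (2*α - 2) * n = n ^ (2*α - 1) := by
    nth_rewrite 2 [← Real.rpow_one n]
    rw [← Real.rpow_add hn0]; ring_nf
  have he0 : (0:ℝ) ≤ n ^ (2*α - 2) := Real.rpow_nonneg hn0.le _
  have key : (n + n ^ β - gy) * (1 - c * n ^ (2*α - 2)) + (c * n ^ (2*α - 2)) * n ^ β ≥ 0 :=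
    add_nonneg (mul_nonneg (by linarith) (by linarith))
      (mul_nonneg (mul_nonneg hc.le he0) hβpos)
  have key' : (n + n ^ β - gy) + c * n ^ (2*α - 2) * gy - c * n ^ (2*α - 2) * n ≥ 0 := by
    nlinarith [key]
  rw [ge_iff_le, show c * n ^ (2*α - 1) = c * (n ^ (2*α - 2) * n) by rw [hmul]]
  linarith [hmain, key']
end
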